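/- arXiv:2111.08311 — 8 statements merged into one kernel-verified Lean document; each statement's English description precedes it below -/
import Mathlib

section
/- Let B be a nonnegative real-valued random variable and let v ≥ 0. Define g(b) = (v − b)·P(B ≤ b) for b ≥ 0. Then the set of maximizers {b ∈ [0, ∞) : g(b) = sup_{b' ≥ 0} g(b')} is nonempty and possesses a least element, and this least element belongs to [0, v]. -/
/-!
Write `F` for the distribution function of `B`, which is monotone and right-continuous. On
`(-∞, v]` the factor `v - b` is nonnegative, so the left jumps of `F` can only make
`g b = (v - b) * F b` jump down: `g` is upper semicontinuous there. Hence `g` attains its maximum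
on the compact interval `[0, v]`, and its maximizers there form a nonempty compact set, which has a
least element. Beyond `v` we have `g ≤ 0 = g v`, so this maximum is also the supremum over `[0, ∞)`.
-/

open MeasureTheory Set Filter Topology

theorem UpperSemicontinuousOn.exists_isLeast_isMaxOn {α β : Type*} [LinearOrder α]
    [TopologicalSpace α] [ClosedIicTopology α] [LinearOrder β] {f : α → β} {s : Set α}
    (hf : UpperSemicontinuousOn f s) (hs : IsCompact s) (hne : s.Nonempty) :
    ∃ m, IsLeast {x | x ∈ s ∧ IsMaxOn f s x} m := by
  obtain ⟨a, has, hmax⟩ := hf.exists_isMaxOn hne hs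
  have hargmax : {x | x ∈ s ∧ IsMaxOn f s x} = s ∩ f ⁻¹' Ici (f a) := by
    ext x
    exact and_congr_right fun _ =>
      ⟨fun hx => hx has, fun hx y hy => (hmax hy).trans (mem_Ici.mp hx)⟩
  rw [hargmax]
  exact (hf.isCompact_inter_preimage_Ici hs (f a)).exists_isLeast ⟨a, has, le_rfl⟩

namespace StieltjesFunction

theorem upperSemicontinuousOn_sub_mul (F : StieltjesFunction ℝ) (v : ℝ) :
    UpperSemicontinuousOn (fun b => (v - b) * F b) (Iic v) := by
  intro b hbv y hy
  have hright : ∀ᶠ t in 𝓝[≥] b, (v - t) * F t < y :=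
    ((continuousWithinAt_const.sub continuousWithinAt_id).mul
      (F.right_continuous b)).eventually_lt_const hy
  have hleft : ∀ᶠ t in 𝓝[Iic v ∩ Iic b] b, (v - t) * F t < y := by
    have hFb : ∀ᶠ t in 𝓝 b, (v - t) * F b < y :=
      ((continuous_const.sub continuous_id).mul continuous_const).continuousAt.eventually_lt
        continuousAt_const hy
    filter_upwards [nhdsWithin_le_nhds hFb, self_mem_nhdsWithin] with t ht htIic
    calc (v - t) * F t ≤ (v - t) * F b :=
          mul_le_mul_of_nonneg_left (F.mono htIic.2) (sub_nonneg.mpr htIic.1)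
      _ < y := ht
  have hsplit : 𝓝[Iic v] b ≤ 𝓝[Iic v ∩ Iic b] b ⊔ 𝓝[≥] b := by
    rw [← nhdsWithin_union, inter_union_distrib_right, Iic_union_Ici, inter_univ]
    exact nhdsWithin_mono b subset_union_left
  exact hsplit ⟨hleft, hright⟩

theorem exists_isLeast_argmax_sub_mul (F : StieltjesFunction ℝ) (hF : ∀ b, 0 ≤ F b)
    {v : ℝ} (hv : 0 ≤ v) :
    ∃ m ∈ Icc (0 : ℝ) v, IsLeast
      {b : ℝ | 0 ≤ b ∧ (v - b) * F b = sSup ((fun b => (v - b) * F b) '' Ici (0 : ℝ))} m := by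
  set g : ℝ → ℝ := fun b => (v - b) * F b
  obtain ⟨m, ⟨hm, hmax⟩, hleast⟩ :=
    ((F.upperSemicontinuousOn_sub_mul v).mono Icc_subset_Iic_self).exists_isLeast_isMaxOn
      isCompact_Icc (nonempty_Icc.mpr hv)
  have hmaxIci : IsMaxOn g (Ici 0) m := by
    intro b (hb : 0 ≤ b)
    rcases le_or_gt b v with hbv | hvb
    · exact hmax ⟨hb, hbv⟩
    · calc g b ≤ 0 := mul_nonpos_of_nonpos_of_nonneg (by linarith) (hF b)
        _ = g v := by simp [g]
        _ ≤ g m := hmax ⟨hv, le_rfl⟩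
  have hsSup : sSup (g '' Ici 0) = g m :=
    IsGreatest.csSup_eq ⟨mem_image_of_mem g hm.1, forall_mem_image.mpr hmaxIci⟩
  refine ⟨m, hm, ⟨hm.1, hsSup.symm⟩, ?_⟩
  rintro b ⟨hb, hgb⟩
  rcases le_or_gt b v with hbv | hvb
  · refine hleast ⟨⟨hb, hbv⟩, fun c hc => ?_⟩
    exact (hmax hc).trans (hsSup ▸ hgb).ge
  · exact hm.2.trans hvb.le

end StieltjesFunction

theorem first_price_smallest_optimal_bid_exists_general
    {Ω : Type*} [MeasurableSpace Ω] (P : Measure Ω) [IsProbabilityMeasure P]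
    (X : Ω → ℝ) (hX : Measurable X)
    (v : ℝ) (hv : 0 ≤ v)
    (g : ℝ → ℝ) (hg : ∀ b, g b = (v - b) * (P {ω | X ω ≤ b}).toReal) :
    ∃ m ∈ Set.Icc (0 : ℝ) v,
      IsLeast {b : ℝ | 0 ≤ b ∧ g b = sSup (g '' Set.Ici (0 : ℝ))} m := by
  have : IsProbabilityMeasure (P.map X) := Measure.isProbabilityMeasure_map hX.aemeasurable
  have hcdf : ∀ b, (P {ω | X ω ≤ b}).toReal = ProbabilityTheory.cdf (P.map X) b := fun b => by
    rw [ProbabilityTheory.cdf_eq_real, measureReal_def, Measure.map_apply hX measurableSet_Iic]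
    rfl
  obtain rfl : g = fun b => (v - b) * ProbabilityTheory.cdf (P.map X) b :=
    funext fun b => by rw [hg, hcdf]
  exact (ProbabilityTheory.cdf (P.map X)).exists_isLeast_argmax_sub_mul
    (ProbabilityTheory.cdf_nonneg _) hv

/-- For a nonnegative real random variable `B` (modelled by `X`) and `v ≥ 0`,
the set of maximizers over `[0, ∞)` of `g(b) = (v - b) * P(B ≤ b)` is nonempty, has a
least element, and this least element belongs to `[0, v]`. -/
theorem first_price_smallest_optimal_bid_exists
    {Ω : Type*} [MeasurableSpace Ω] (P : Measure Ω) [IsProbabilityMeasure P]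
    (X : Ω → ℝ) (hX : Measurable X) (hX0 : ∀ ω, 0 ≤ X ω)
    (v : ℝ) (hv : 0 ≤ v)
    (g : ℝ → ℝ) (hg : ∀ b, g b = (v - b) * (P {ω | X ω ≤ b}).toReal) :
    ∃ m ∈ Set.Icc (0 : ℝ) v,
      IsLeast {b : ℝ | 0 ≤ b ∧ g b = sSup (g '' Set.Ici (0 : ℝ))} m :=
  first_price_smallest_optimal_bid_exists_general P X hX v hv g hg
end

section
/- Let B be a nonnegative real-valued random variable. For v ≥ 0 let m(v) denote the least element of the set of maximizers over [0, ∞) of the function b ↦ (v − b)·P(B ≤ b) (this least element exists). Then m is nondecreasing: if 0 ≤ v ≤ v', then m(v) ≤ m(v'). -/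
open MeasureTheory

/-- For a nonnegative real random variable `B` (modelled by `X`), let `m v`
be the least maximizer over `[0, ∞)` of `b ↦ (v - b) * P(B ≤ b)` for each `v ≥ 0`.
Then `m` is nondecreasing on `[0, ∞)`. -/
theorem first_price_smallest_optimal_bid_monotone_in_reward
    {Ω : Type*} [MeasurableSpace Ω] (P : Measure Ω) [IsProbabilityMeasure P]
    (X : Ω → ℝ) (hX : Measurable X) (hX0 : ∀ ω, 0 ≤ X ω)
    (m : ℝ → ℝ)
    (hm : ∀ v ≥ (0 : ℝ),
      IsLeast {b : ℝ | 0 ≤ b ∧ ∀ b' ≥ (0 : ℝ),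
        (v - b') * (P {ω | X ω ≤ b'}).toReal ≤ (v - b) * (P {ω | X ω ≤ b}).toReal} (m v)) :
    ∀ v v' : ℝ, 0 ≤ v → v ≤ v' → m v ≤ m v' := by
  intro v v' hv hvv'
  set F : ℝ → ℝ := fun b => (P {ω | X ω ≤ b}).toReal with hF
  have hv' : (0:ℝ) ≤ v' := le_trans hv hvv'
  rcases eq_or_lt_of_le hvv' with rfl | hlt
  · exact le_of_eq ((hm v hv).unique (hm v hv))
  by_contra hcon
  push_neg at hcon
  obtain ⟨⟨hb0, hbmax⟩, hbleast⟩ := hm v hv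
  obtain ⟨⟨hb'0, hb'max⟩, _⟩ := hm v' hv'
  set b := m v
  set b' := m v'
  -- F b' ≤ F b since b' ≤ b
  have hFmono : F b' ≤ F b := by
    apply ENNReal.toReal_mono (measure_ne_top P _)
    exact measure_mono (fun ω hω => le_trans hω hcon.le)
  have h1 : (v - b') * F b' ≤ (v - b) * F b := hbmax b' hb'0
  have h2 : (v' - b) * F b ≤ (v' - b') * F b' := hb'max b hb0
  have hsum : (v' - v) * F b ≤ (v' - v) * F b' := by nlinarith
  have hFeq : F b = F b' := le_antisymm (le_of_mul_le_mul_left hsum (by linarith)) hFmono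
  -- then b' is a maximizer for v, contradicting leastness of b
  have : b ≤ b' := by
    apply hbleast
    refine ⟨hb'0, fun b'' hb'' => ?_⟩
    calc (v - b'') * F b'' ≤ (v - b) * F b := hbmax b'' hb''
      _ ≤ (v - b') * F b' := by
          rw [hFeq]
          have : (0:ℝ) ≤ F b' := ENNReal.toReal_nonneg
          nlinarith
  linarith
end

section
/- Let B be a nonnegative real-valued random variable, and let K ≥ 0, a > 0, η > 0 be constants. Define f(b) = (K + η·b·P(B ≤ b)) / (a + η·P(B ≤ b)) for b ≥ 0, and set v = inf_{b ≥ 0} f(b). Then for every b* ≥ 0: f(b*) = v if and only if b* maximizes the function b ↦ (v − b)·P(B ≤ b) over [0, ∞). -/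
open MeasureTheory

/-- With `f(b) = (K + η·b·P(B ≤ b)) / (a + η·P(B ≤ b))` and
`v = inf_{b ≥ 0} f(b)`, a bid `b* ≥ 0` satisfies `f(b*) = v` if and only if `b*`
maximizes the static first-price auction payoff `b ↦ (v - b)·P(B ≤ b)` over `[0, ∞)`. -/
theorem social_marketing_first_price_optimal_bid_characterization
    {Ω : Type*} [MeasurableSpace Ω] (P : Measure Ω) [IsProbabilityMeasure P]
    (X : Ω → ℝ) (hX : Measurable X) (hX0 : ∀ ω, 0 ≤ X ω)
    (K a η : ℝ) (hK : 0 ≤ K) (ha : 0 < a) (hη : 0 < η)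
    (f : ℝ → ℝ)
    (hf : ∀ b, f b = (K + η * b * (P {ω | X ω ≤ b}).toReal)
                      / (a + η * (P {ω | X ω ≤ b}).toReal))
    (v : ℝ) (hv : v = sInf (f '' Set.Ici (0 : ℝ))) :
    ∀ bstar ≥ (0 : ℝ),
      (f bstar = v ↔
        ∀ b ≥ (0 : ℝ),
          (v - b) * (P {ω | X ω ≤ b}).toReal
            ≤ (v - bstar) * (P {ω | X ω ≤ bstar}).toReal) := by
  set G : ℝ → ℝ := fun b => (P {ω | X ω ≤ b}).toReal with hGdef
  have hG0 : ∀ b, 0 ≤ G b := fun b => ENNReal.toReal_nonneg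
  have hG1 : ∀ b, G b ≤ 1 := by
    intro b
    have h1 : P {ω | X ω ≤ b} ≤ 1 := prob_le_one
    have := ENNReal.toReal_mono (by norm_num) h1
    simpa using this
  have hden : ∀ b, 0 < a + η * G b := fun b =>
    add_pos_of_pos_of_nonneg ha (mul_nonneg hη.le (hG0 b))
  have hne : (f '' Set.Ici (0 : ℝ)).Nonempty := ⟨f 0, ⟨0, Set.self_mem_Ici, rfl⟩⟩
  have hbdd : BddBelow (f '' Set.Ici (0 : ℝ)) := by
    refine ⟨0, ?_⟩
    rintro x ⟨b, hb, rfl⟩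
    have hb' : (0:ℝ) ≤ b := hb
    rw [hf]
    exact div_nonneg (by positivity) (hden b).le
  have hvle : ∀ b ≥ (0 : ℝ), v ≤ f b := by
    intro b hb
    rw [hv]
    exact csInf_le hbdd ⟨b, hb, rfl⟩
  -- Claim A
  have claimA : ∀ b ≥ (0 : ℝ), (v - b) * G b ≤ (K - v * a) / η := by
    intro b hb
    have h := hvle b hb
    rw [hf, le_div_iff₀ (hden b)] at h
    rw [le_div_iff₀ hη]
    nlinarith [h]
  -- Claim B
  have claimB : ∀ ε > (0 : ℝ), ∃ b ≥ (0 : ℝ), (K - v * a) / η - ε < (v - b) * G b := by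
    intro ε hε
    set δ : ℝ := ε * η / (a + η) with hδdef
    have haη : 0 < a + η := by linarith
    have hδ : 0 < δ := by positivity
    have hδeq : δ * (a + η) = ε * η := div_mul_cancel₀ _ haη.ne'
    have hlt : v < v + δ := by linarith
    obtain ⟨x, ⟨b, hb, rfl⟩, hxlt⟩ := exists_lt_of_csInf_lt hne (hv ▸ hlt)
    rw [← hv] at hxlt
    refine ⟨b, hb, ?_⟩
    rw [hf, div_lt_iff₀ (hden b)] at hxlt
    have hGle : δ * G b ≤ δ * 1 := mul_le_mul_of_nonneg_left (hG1 b) hδ.le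
    rw [sub_lt_iff_lt_add, div_lt_iff₀ hη]
    nlinarith [hxlt, hGle]
  intro bstar hbstar
  constructor
  · intro heq b hb
    have h := heq
    rw [hf, div_eq_iff (hden bstar).ne'] at h
    have hc : (K - v * a) / η = (v - bstar) * G bstar := by
      rw [div_eq_iff hη.ne']
      nlinarith [h]
    calc (v - b) * G b ≤ (K - v * a) / η := claimA b hb
      _ = (v - bstar) * G bstar := hc
  · intro hmax
    have hcm : (K - v * a) / η ≤ (v - bstar) * G bstar := by
      by_contra hcon
      push_neg at hcon
      obtain ⟨b, hb, hlt⟩ := claimB ((K - v * a) / η - (v - bstar) * G bstar)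
        (by linarith)
      have := hmax b hb
      linarith
    have hmc : (v - bstar) * G bstar = (K - v * a) / η :=
      le_antisymm (claimA bstar hbstar) hcm
    rw [eq_div_iff hη.ne'] at hmc
    rw [hf, div_eq_iff (hden bstar).ne']
    nlinarith [hmc]
end

section
/- Let B be a nonnegative real-valued random variable and K ≥ 0, η^I ≥ 0, ρ ≥ 0 with η^I + ρ > 0. For η ≥ 0, define V*(η) = sup_{b ≥ 0} (η^I·K + η·(K − b)·P(B ≤ b)) / (η^I + ρ + η·P(B ≤ b)). Then V* is nondecreasing in η: 0 ≤ η̃ ≤ η implies V*(η̃) ≤ V*(η). -/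
open MeasureTheory

/-- The optimal value over constant bidding policies of the purchase-based commercial
advertising model, as a function of the targeted-ad intensity `η`. -/
noncomputable def purchaseVstarEta {Ω : Type*} [MeasurableSpace Ω]
    (P : Measure Ω) (X : Ω → ℝ) (K ηI ρ η : ℝ) : ℝ :=
  sSup ((fun b => (ηI * K + η * (K - b) * (P {ω | X ω ≤ b}).toReal)
                    / (ηI + ρ + η * (P {ω | X ω ≤ b}).toReal)) '' Set.Ici (0 : ℝ))

/-- `V*(η)` is nondecreasing in the intensity `η = η^T` of connections
to websites displaying targeted ads: `0 ≤ η̃ ≤ η` implies `V*(η̃) ≤ V*(η)`. -/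
theorem purchase_based_Vstar_monotone_etaT
    {Ω : Type*} [MeasurableSpace Ω] (P : Measure Ω) [IsProbabilityMeasure P]
    (X : Ω → ℝ) (hX : Measurable X) (hX0 : ∀ ω, 0 ≤ X ω)
    (K ηI ρ : ℝ) (hK : 0 ≤ K) (hηI : 0 ≤ ηI) (hρ : 0 ≤ ρ) (hpos : 0 < ηI + ρ)
    (η η' : ℝ) (hη' : 0 ≤ η') (hle : η' ≤ η) :
    purchaseVstarEta P X K ηI ρ η' ≤ purchaseVstarEta P X K ηI ρ η := by
  have hη : 0 ≤ η := le_trans hη' hle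
  set p : ℝ → ℝ := fun b => (P {ω | X ω ≤ b}).toReal with hpdef
  have hp0 : ∀ b, 0 ≤ p b := fun b => ENNReal.toReal_nonneg
  have hp1 : ∀ b, p b ≤ 1 := by
    intro b
    have h : P {ω | X ω ≤ b} ≤ 1 := prob_le_one
    calc p b ≤ (1 : ENNReal).toReal := ENNReal.toReal_mono ENNReal.one_ne_top h
      _ = 1 := by simp
  have hD : ∀ t b, 0 ≤ t → 0 < ηI + ρ + t * p b := by
    intro t b ht
    have := hp0 b
    nlinarith
  have hbound : ∀ b, 0 ≤ b →
      (ηI * K + η * (K - b) * p b) / (ηI + ρ + η * p b) ≤ K := by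
    intro b hb
    rw [div_le_iff₀ (hD η b hη)]
    have h1 := hp0 b
    nlinarith [mul_nonneg (mul_nonneg hη hb) (hp0 b), mul_nonneg hK hρ]
  have hbdd : BddAbove ((fun b => (ηI * K + η * (K - b) * p b)
      / (ηI + ρ + η * p b)) '' Set.Ici (0 : ℝ)) := by
    refine ⟨K, ?_⟩
    rintro x ⟨b, hb, rfl⟩
    exact hbound b hb
  have hmem0 : (ηI * K + η * (K - 0) * p 0) / (ηI + ρ + η * p 0) ∈
      ((fun b => (ηI * K + η * (K - b) * p b) / (ηI + ρ + η * p b)) '' Set.Ici (0 : ℝ)) :=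
    ⟨0, Set.self_mem_Ici, rfl⟩
  have hle0 : (ηI * K + η * (K - 0) * p 0) / (ηI + ρ + η * p 0) ≤
      sSup ((fun b => (ηI * K + η * (K - b) * p b) / (ηI + ρ + η * p b)) '' Set.Ici (0 : ℝ)) :=
    le_csSup hbdd hmem0
  show sSup ((fun b => (ηI * K + η' * (K - b) * p b) / (ηI + ρ + η' * p b)) '' Set.Ici (0 : ℝ)) ≤
      sSup ((fun b => (ηI * K + η * (K - b) * p b) / (ηI + ρ + η * p b)) '' Set.Ici (0 : ℝ))
  apply Real.sSup_le
  · rintro x ⟨b, hb, rfl⟩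
    simp only
    by_cases hcase : b * (ηI + ρ) ≤ K * ρ
    · -- pointwise monotone in η at this b
      have h1 : (ηI * K + η' * (K - b) * p b) / (ηI + ρ + η' * p b) ≤
          (ηI * K + η * (K - b) * p b) / (ηI + ρ + η * p b) := by
        rw [div_le_div_iff₀ (hD η' b hη') (hD η b hη)]
        have hpb := hp0 b
        nlinarith [mul_nonneg (mul_nonneg (hp0 b) (sub_nonneg.2 hle)) (sub_nonneg.2 hcase)]
      exact h1.trans (le_csSup hbdd ⟨b, hb, rfl⟩)
    · push_neg at hcase
      have h1 : (ηI * K + η' * (K - b) * p b) / (ηI + ρ + η' * p b) ≤ ηI * K / (ηI + ρ) := by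
        rw [div_le_div_iff₀ (hD η' b hη') hpos]
        have hpb := hp0 b
        nlinarith [mul_nonneg (mul_nonneg hη' (hp0 b)) (sub_nonneg.2 hcase.le)]
      have h2 : ηI * K / (ηI + ρ) ≤ (ηI * K + η * (K - 0) * p 0) / (ηI + ρ + η * p 0) := by
        rw [div_le_div_iff₀ hpos (hD η 0 hη)]
        have hp00 := hp0 0
        nlinarith [mul_nonneg (mul_nonneg (mul_nonneg hη hK) (hp0 0)) hρ]
      exact h1.trans (h2.trans hle0)
  · refine le_trans ?_ hle0
    apply div_nonneg _ (hD η 0 hη).le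
    nlinarith [mul_nonneg hηI hK, mul_nonneg (mul_nonneg hη hK) (hp0 0)]
end

section
/- Let B be a nonnegative real-valued random variable, and let K ≥ 0, η^I ≥ 0, η^T ≥ 0, ρ ≥ 0 with η^I + ρ > 0. Define f(b) = (η^I·K + η^T·(K − b)·P(B ≤ b)) / (η^I + ρ + η^T·P(B ≤ b)) for b ≥ 0. Then sup_{b ∈ [0, ρK/(η^I+ρ)]} f(b) = sup_{b ≥ 0} f(b); i.e., the search for an optimal constant bid can be restricted to the bounded interval [0, ρK/(η^I+ρ)]. -/
open MeasureTheory Set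

/-!
Beyond the threshold `b* = ρK/(η^I+ρ)` raising the bid never helps: the gain at any `b ≥ b*`
is at most `η^I K/(η^I+ρ)`, whatever the winning probability, and the gain at `b*` is exactly
this value, since there `(η^I+ρ)(K - b*) = η^I K`. So each value of the gain on `[0, ∞)` is
dominated by a value on `[0, b*]`.
-/

/-- Gain of the constant bid `b` that wins a targeted auction with probability `p`. -/
noncomputable def constantBidGain (K ηI ηT ρ b p : ℝ) : ℝ :=
  (ηI * K + ηT * (K - b) * p) / (ηI + ρ + ηT * p)

theorem sSup_image_Icc_eq_sSup_image_Ici {β α : Type*} [LinearOrder β]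
    [ConditionallyCompleteLinearOrder α] {f : β → α} {a c : β} (hac : a ≤ c)
    (hc : ∀ b, c ≤ b → f b ≤ f c) :
    sSup (f '' Icc a c) = sSup (f '' Ici a) := by
  refine csSup_eq_csSup_of_forall_exists_le ?_ ?_
  · rintro _ ⟨b, hb, rfl⟩
    exact ⟨f b, mem_image_of_mem f hb.1, le_rfl⟩
  · rintro _ ⟨b, hb, rfl⟩
    rcases le_total b c with hbc | hcb
    · exact ⟨f b, mem_image_of_mem f ⟨hb, hbc⟩, le_rfl⟩
    · exact ⟨f c, mem_image_of_mem f ⟨hac, le_rfl⟩, hc b hcb⟩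

section constantBidGain

variable {K ηI ηT ρ p : ℝ}

theorem constantBidGain_threshold (hηT : 0 ≤ ηT) (hp : 0 ≤ p) (hpos : 0 < ηI + ρ) :
    constantBidGain K ηI ηT ρ (ρ * K / (ηI + ρ)) p = ηI * K / (ηI + ρ) := by
  have hden : 0 < ηI + ρ + ηT * p := by positivity
  rw [constantBidGain, div_eq_div_iff hden.ne' hpos.ne']
  field_simp
  ring

theorem constantBidGain_le_of_threshold_le {b : ℝ} (hηT : 0 ≤ ηT) (hp : 0 ≤ p)
    (hpos : 0 < ηI + ρ) (hb : ρ * K / (ηI + ρ) ≤ b) :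
    constantBidGain K ηI ηT ρ b p ≤ ηI * K / (ηI + ρ) := by
  have hden : 0 < ηI + ρ + ηT * p := by positivity
  have hρK : ρ * K ≤ (ηI + ρ) * b := by rwa [div_le_iff₀' hpos] at hb
  rw [constantBidGain, div_le_div_iff₀ hden hpos]
  nlinarith [mul_nonneg hηT hp]

end constantBidGain

theorem purchase_based_optimal_bid_search_restriction_general
    {Ω : Type*} [MeasurableSpace Ω] (P : Measure Ω)
    (X : Ω → ℝ)
    (K ηI ηT ρ : ℝ) (hK : 0 ≤ K) (hηT : 0 ≤ ηT) (hρ : 0 ≤ ρ)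
    (hpos : 0 < ηI + ρ)
    (f : ℝ → ℝ)
    (hf : ∀ b, f b = (ηI * K + ηT * (K - b) * (P {ω | X ω ≤ b}).toReal)
                      / (ηI + ρ + ηT * (P {ω | X ω ≤ b}).toReal)) :
    sSup (f '' Set.Icc (0 : ℝ) (ρ * K / (ηI + ρ))) = sSup (f '' Set.Ici (0 : ℝ)) := by
  have hf' : ∀ b, f b = constantBidGain K ηI ηT ρ b (P {ω | X ω ≤ b}).toReal := hf
  refine sSup_image_Icc_eq_sSup_image_Ici (by positivity) fun b hb => ?_
  rw [hf', hf', constantBidGain_threshold hηT ENNReal.toReal_nonneg hpos]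
  exact constantBidGain_le_of_threshold_le hηT ENNReal.toReal_nonneg hpos hb

/-- In the purchase-based commercial advertising model with first-price
targeted auctions, the supremum of the gain `f` of constant bidding policies over the
bounded interval `[0, ρK/(η^I+ρ)]` equals its supremum over `[0, ∞)`. -/
theorem purchase_based_optimal_bid_search_restriction
    {Ω : Type*} [MeasurableSpace Ω] (P : Measure Ω) [IsProbabilityMeasure P]
    (X : Ω → ℝ) (hX : Measurable X) (hX0 : ∀ ω, 0 ≤ X ω)
    (K ηI ηT ρ : ℝ) (hK : 0 ≤ K) (hηI : 0 ≤ ηI) (hηT : 0 ≤ ηT) (hρ : 0 ≤ ρ)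
    (hpos : 0 < ηI + ρ)
    (f : ℝ → ℝ)
    (hf : ∀ b, f b = (ηI * K + ηT * (K - b) * (P {ω | X ω ≤ b}).toReal)
                      / (ηI + ρ + ηT * (P {ω | X ω ≤ b}).toReal)) :
    sSup (f '' Set.Icc (0 : ℝ) (ρ * K / (ηI + ρ))) = sSup (f '' Set.Ici (0 : ℝ)) :=
  purchase_based_optimal_bid_search_restriction_general P X K ηI ηT ρ hK hηT hρ hpos f hf
end

section
/- Let B be a nonnegative real-valued random variable and K ≥ 0, η^I ≥ 0, ρ ≥ 0 with η^I + ρ > 0. For η ≥ 0, define W(η) = inf_{b ≥ 0} (K + η·b·P(B ≤ b)) / (η^I + ρ + η·P(B ≤ b)). Then W is nonincreasing in η: 0 ≤ η̃ ≤ η implies W(η) ≤ W(η̃). -/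
open MeasureTheory

/-- The optimal cost over constant bidding policies of the social marketing model with
first-price targeted auctions, as a function of the targeted-ad intensity `η`. -/
noncomputable def socialWstarEta {Ω : Type*} [MeasurableSpace Ω]
    (P : Measure Ω) (X : Ω → ℝ) (K ηI ρ η : ℝ) : ℝ :=
  sInf ((fun b => (K + η * b * (P {ω | X ω ≤ b}).toReal)
                    / (ηI + ρ + η * (P {ω | X ω ≤ b}).toReal)) '' Set.Ici (0 : ℝ))

/-- `W(η)` is nonincreasing in the intensity `η = η^T` of connections
to websites displaying targeted ads: `0 ≤ η̃ ≤ η` implies `W(η) ≤ W(η̃)`. -/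
theorem social_marketing_Wstar_antitone_etaT
    {Ω : Type*} [MeasurableSpace Ω] (P : Measure Ω) [IsProbabilityMeasure P]
    (X : Ω → ℝ) (hX : Measurable X) (hX0 : ∀ ω, 0 ≤ X ω)
    (K ηI ρ : ℝ) (hK : 0 ≤ K) (hηI : 0 ≤ ηI) (hρ : 0 ≤ ρ) (hpos : 0 < ηI + ρ)
    (η η' : ℝ) (hη' : 0 ≤ η') (hle : η' ≤ η) :
    socialWstarEta P X K ηI ρ η ≤ socialWstarEta P X K ηI ρ η' := by
  have hη : 0 ≤ η := hη'.trans hle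
  set p : ℝ → ℝ := fun b => (P {ω | X ω ≤ b}).toReal with hp_def
  have hp : ∀ b, 0 ≤ p b := fun b => ENNReal.toReal_nonneg
  set f : ℝ → ℝ → ℝ := fun e b => (K + e * b * p b) / (ηI + ρ + e * p b) with hf_def
  have hden : ∀ (e : ℝ), 0 ≤ e → ∀ b, 0 < ηI + ρ + e * p b := by
    intro e he b
    have := mul_nonneg he (hp b)
    linarith
  have hbdd : BddBelow (f η '' Set.Ici (0 : ℝ)) := by
    refine ⟨0, ?_⟩
    rintro x ⟨b, hb, rfl⟩
    have : 0 ≤ K + η * b * p b := by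
      have := mul_nonneg (mul_nonneg hη hb) (hp b)
      linarith
    exact div_nonneg this (hden η hη b).le
  show sInf (f η '' Set.Ici 0) ≤ sInf (f η' '' Set.Ici 0)
  apply le_csInf ⟨f η' 0, Set.mem_image_of_mem _ Set.self_mem_Ici⟩
  rintro x ⟨b, (hb : (0:ℝ) ≤ b), rfl⟩
  by_cases hcase : b * (ηI + ρ) ≤ K
  · calc sInf (f η '' Set.Ici 0) ≤ f η b := csInf_le hbdd ⟨b, hb, rfl⟩
      _ ≤ f η' b := by
        rw [div_le_div_iff₀ (hden η hη b) (hden η' hη' b)]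
        nlinarith [hp b, mul_nonneg (sub_nonneg.2 hle) (hp b)]
  · push_neg at hcase
    calc sInf (f η '' Set.Ici 0) ≤ f η 0 := csInf_le hbdd ⟨0, Set.self_mem_Ici, rfl⟩
      _ ≤ K / (ηI + ρ) := by
        simp only [hf_def, mul_zero, zero_mul, mul_comm, add_zero]
        apply div_le_div_of_nonneg_left hK hpos
        nlinarith [hp 0, mul_nonneg hη (hp 0)]
      _ ≤ f η' b := by
        rw [div_le_div_iff₀ hpos (hden η' hη' b)]
        nlinarith [hp b, mul_nonneg hη' (hp b), mul_nonneg (mul_nonneg hη' (hp b)) (sub_nonneg.2 hcase.le)]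
end

section
/- Let η^I, η^T, ρ, K > 0 and set b̂ = ρ·K / (η^I + ρ). For any constant B ≥ 0, define f_B(b) = (η^I·K + η^T·(K − B)·1_{b ≥ B}) / (η^I + ρ + η^T·1_{b ≥ B}) for b ≥ 0. Then for every B ≥ 0 and every b ≥ 0, f_B(b̂) ≥ f_B(b); i.e., the bid b̂ = ρK/(η^I+ρ) is optimal regardless of the constant value B of the competing maximal bid. -/
/-- With a deterministic constant competing maximal bid `B` and
second-price targeted auctions, the bid `b̂ = ρK/(η^I+ρ)` is a dominant bidding
strategy: for every constant `B ≥ 0` and every bid `b ≥ 0`,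
`f_B(b) ≤ f_B(b̂)`, where
`f_B(b) = (η^I·K + η^T·(K − B)·1_{b ≥ B}) / (η^I + ρ + η^T·1_{b ≥ B})`. -/
theorem dominant_bid_constant_competitor
    (ηI ηT ρ K : ℝ) (hηI : 0 < ηI) (hηT : 0 < ηT) (hρ : 0 < ρ) (hK : 0 < K)
    (bhat : ℝ) (hbhat : bhat = ρ * K / (ηI + ρ)) :
    ∀ B ≥ (0 : ℝ), ∀ b ≥ (0 : ℝ),
      (ηI * K + ηT * (K - B) * (if B ≤ b then 1 else 0))
          / (ηI + ρ + ηT * (if B ≤ b then 1 else 0))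
        ≤ (ηI * K + ηT * (K - B) * (if B ≤ bhat then 1 else 0))
            / (ηI + ρ + ηT * (if B ≤ bhat then 1 else 0)) := by
  intro B hB b hb
  have hd1 : 0 < ηI + ρ := by linarith
  have hd2 : 0 < ηI + ρ + ηT := by linarith
  -- win ≥ lose iff B ≤ bhat
  have key : ∀ B' : ℝ, B' ≤ bhat ↔
      ηI * K / (ηI + ρ) ≤ (ηI * K + ηT * (K - B')) / (ηI + ρ + ηT) := by
    intro B'
    rw [div_le_div_iff₀ hd1 hd2, hbhat, le_div_iff₀ hd1]
    constructor <;> intro h <;> nlinarith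
  by_cases h1 : B ≤ bhat
  · -- bhat wins
    simp only [if_pos h1]
    by_cases h2 : B ≤ b
    · simp [h2]
    · simp only [if_neg h2, mul_zero, add_zero]
      simpa using (key B).mp h1
  · -- bhat loses
    simp only [if_neg h1, mul_zero, add_zero]
    by_cases h2 : B ≤ b
    · simp only [if_pos h2, mul_one]
      have : bhat ≤ B := le_of_not_ge h1
      rw [div_le_div_iff₀ hd2 hd1]
      rw [hbhat] at this
      rw [div_le_iff₀ hd1] at this
      nlinarith
    · simp [h2]
end

section
/- Let B^T and B^NT be nonnegative integrable real-valued random variables, let K ≥ 0, η^T ≥ 0, η^NT ≥ 0, η^S ≥ 0, η^I > 0, and p ∈ [0, 1). Define, for b^T, b^NT ≥ 0, F(b^T, b^NT) = (K + η^T·E[B^T·1_{B^T ≤ b^T}] + (η^NT/(1 − p))·E[B^NT·1_{B^NT ≤ b^NT}]) / (η^I + η^T·P(B^T ≤ b^T) + η^NT·P(B^NT ≤ b^NT) + p·η^S), and set v = inf_{b^T, b^NT ≥ 0} F(b^T, b^NT). Then F(v, (1 − p)·v) = v; in particular the infimum over pairs is attained, and inf_{b ≥ 0} F(b, (1 − p)·b)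 = v. -/
/-!
Write `F = N / D` with `0 < D ≤ M`. As `v` is the infimum of `N / D`, the function
`N - v * D = D * (F - v)` is nonnegative on admissible bids and takes values arbitrarily close
to `0` there, so at any admissible minimizer of `N - v * D` the ratio is exactly `v`.
Under second-price rules `N - v * D` splits as
`K - v (ηI + p ηS) + ηT E[(B^T - v) 1_{B^T ≤ b^T}] + ηNT/(1-p) E[(B^NT - (1-p) v) 1_{B^NT ≤ b^NT}]`,
and `b ↦ E[(B - u) 1_{B ≤ b}]` is minimized at `b = u`: win exactly the auctions priced below `u`.
-/

open MeasureTheory Set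

theorem eq_of_isGLB_of_isMinOn_mul_sub {ι : Type*} {f D : ι → ℝ} {s : Set ι} {v M : ℝ} {i₀ : ι}
    (hv : IsGLB (f '' s) v) (hD : ∀ i ∈ s, 0 < D i) (hDM : ∀ i ∈ s, D i ≤ M) (hi₀ : i₀ ∈ s)
    (hmin : IsMinOn (fun i => D i * (f i - v)) s i₀) : f i₀ = v := by
  have hM : 0 < M := (hD i₀ hi₀).trans_le (hDM i₀ hi₀)
  have hle : D i₀ * (f i₀ - v) ≤ 0 := by
    refine le_of_forall_pos_le_add fun ε hε => ?_
    obtain ⟨_, ⟨i, hi, rfl⟩, hvf, hlt⟩ :=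
      hv.exists_between (lt_add_of_pos_right v (div_pos hε hM))
    calc D i₀ * (f i₀ - v) ≤ D i * (f i - v) := hmin hi
      _ ≤ M * (ε / M) := mul_le_mul (hDM i hi) (by linarith) (sub_nonneg.2 hvf) hM.le
      _ = 0 + ε := by field_simp; ring
  exact le_antisymm (by linarith [nonpos_of_mul_nonpos_right hle (hD i₀ hi₀)])
    (hv.1 (mem_image_of_mem f hi₀))

theorem isMinOn_integral_ite_le_sub_mul_measure {Ω : Type*} [MeasurableSpace Ω]
    (P : Measure Ω) [IsFiniteMeasure P] {X : Ω → ℝ} (hX : Measurable X)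
    (hXint : Integrable X P) (u : ℝ) :
    IsMinOn (fun b => ∫ ω, (if X ω ≤ b then X ω else 0) ∂P - u * (P {ω | X ω ≤ b}).toReal)
      univ u := by
  have hs : ∀ b, MeasurableSet {ω | X ω ≤ b} := fun b => hX measurableSet_Iic
  have hform : ∀ b, ∫ ω, (if X ω ≤ b then X ω else 0) ∂P - u * (P {ω | X ω ≤ b}).toReal
      = ∫ ω, {ω | X ω ≤ b}.indicator (fun ω => X ω - u) ω ∂P := by
    intro b
    rw [integral_indicator (hs b), integral_sub hXint.integrableOn integrableOn_const,
      setIntegral_const, ← integral_indicator (hs b)]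
    simp [indicator_apply, Measure.real, mul_comm]
  intro b _
  simp only [mem_ofPred_eq, hform]
  refine integral_mono ((hXint.sub (integrable_const u)).indicator (hs u))
    ((hXint.sub (integrable_const u)).indicator (hs b)) fun ω => ?_
  by_cases hu : X ω ≤ u <;> by_cases hb : X ω ≤ b <;> simp [hu, hb]
  linarith

/-- In the social marketing model with no discounting, informed
proportion `p`, and fully second-price auctions, the one-step cost
`F(b^T, b^NT) = (K + η^T·E[B^T·1_{B^T ≤ b^T}] + (η^NT/(1−p))·E[B^NT·1_{B^NT ≤ b^NT}])
  / (η^I + η^T·P(B^T ≤ b^T) + η^NT·P(B^NT ≤ b^NT) + p·η^S)`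
with `v = inf_{b^T, b^NT ≥ 0} F(b^T, b^NT)` satisfies `F(v, (1−p)·v) = v`; in
particular the infimum over pairs is attained and
`inf_{b ≥ 0} F(b, (1−p)·b) = v`. -/
theorem second_price_truthful_reduction
    {Ω : Type*} [MeasurableSpace Ω] (P : Measure Ω) [IsProbabilityMeasure P]
    (XT XNT : Ω → ℝ) (hXT : Measurable XT) (hXNT : Measurable XNT)
    (hXT0 : ∀ ω, 0 ≤ XT ω) (hXNT0 : ∀ ω, 0 ≤ XNT ω)
    (hXTint : Integrable XT P) (hXNTint : Integrable XNT P)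
    (K ηT ηNT ηS ηI : ℝ) (hK : 0 ≤ K) (hηT : 0 ≤ ηT) (hηNT : 0 ≤ ηNT)
    (hηS : 0 ≤ ηS) (hηI : 0 < ηI)
    (p : ℝ) (hp : p ∈ Set.Ico (0 : ℝ) 1)
    (F : ℝ → ℝ → ℝ)
    (hF : ∀ bT bNT, F bT bNT =
      (K + ηT * (∫ ω, (if XT ω ≤ bT then XT ω else 0) ∂P)
         + (ηNT / (1 - p)) * (∫ ω, (if XNT ω ≤ bNT then XNT ω else 0) ∂P))
      / (ηI + ηT * (P {ω | XT ω ≤ bT}).toReal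
           + ηNT * (P {ω | XNT ω ≤ bNT}).toReal + p * ηS))
    (v : ℝ)
    (hv : v = sInf {y : ℝ | ∃ bT ≥ (0 : ℝ), ∃ bNT ≥ (0 : ℝ), F bT bNT = y}) :
    F v ((1 - p) * v) = v ∧
      sInf {y : ℝ | ∃ b ≥ (0 : ℝ), F b ((1 - p) * b) = y} = v := by
  obtain ⟨hp0, hp1⟩ := hp
  have h1p : 0 < 1 - p := by linarith
  set D : ℝ × ℝ → ℝ := fun x =>
    ηI + ηT * (P {ω | XT ω ≤ x.1}).toReal + ηNT * (P {ω | XNT ω ≤ x.2}).toReal + p * ηS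
  have hD_pos : ∀ x, 0 < D x := fun x => by positivity
  have hD_le : ∀ x, D x ≤ ηI + ηT * 1 + ηNT * 1 + p * ηS := fun x => by
    dsimp only [D]
    gcongr <;> exact measureReal_le_one
  have hF_nonneg : ∀ b c, 0 ≤ F b c := fun b c => by
    have hIT : 0 ≤ ∫ ω, (if XT ω ≤ b then XT ω else 0) ∂P :=
      integral_nonneg fun ω => by split_ifs <;> simp [hXT0]
    have hINT : 0 ≤ ∫ ω, (if XNT ω ≤ c then XNT ω else 0) ∂P :=
      integral_nonneg fun ω => by split_ifs <;> simp [hXNT0]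
    rw [hF]
    exact div_nonneg (by positivity) (hD_pos (b, c)).le
  have hglb : IsGLB ((fun x : ℝ × ℝ => F x.1 x.2) '' Ici 0 ×ˢ Ici 0) v := by
    rw [image_prod, hv]
    exact isGLB_csInf ⟨F 0 0, 0, le_refl (0 : ℝ), 0, le_refl (0 : ℝ), rfl⟩
      ⟨0, by rintro _ ⟨b, -, c, -, rfl⟩; exact hF_nonneg b c⟩
  have hv0 : 0 ≤ v := hglb.2 (by rintro _ ⟨x, -, rfl⟩; exact hF_nonneg x.1 x.2)
  have hcost : ∀ x : ℝ × ℝ, D x * (F x.1 x.2 - v) = K - v * (ηI + p * ηS)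
      + ηT * (∫ ω, (if XT ω ≤ x.1 then XT ω else 0) ∂P - v * (P {ω | XT ω ≤ x.1}).toReal)
      + ηNT / (1 - p) * (∫ ω, (if XNT ω ≤ x.2 then XNT ω else 0) ∂P
          - (1 - p) * v * (P {ω | XNT ω ≤ x.2}).toReal) := fun x => by
    rw [hF, mul_sub, mul_div_cancel₀ _ (hD_pos x).ne']
    field_simp
    ring
  have hmin : IsMinOn (fun x : ℝ × ℝ => D x * (F x.1 x.2 - v)) (Ici 0 ×ˢ Ici 0)
      (v, (1 - p) * v) := fun x _ => by
    simp only [mem_ofPred_eq, hcost]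
    gcongr _ + ηT * ?_ + _ * ?_
    · exact isMinOn_integral_ite_le_sub_mul_measure P hXT hXTint v (mem_univ x.1)
    · exact isMinOn_integral_ite_le_sub_mul_measure P hXNT hXNTint _ (mem_univ x.2)
  have hFv : F v ((1 - p) * v) = v :=
    eq_of_isGLB_of_isMinOn_mul_sub (f := fun x : ℝ × ℝ => F x.1 x.2) hglb (fun x _ => hD_pos x)
      (fun x _ => hD_le x) (mk_mem_prod hv0 (mul_nonneg h1p.le hv0)) hmin
  refine ⟨hFv, IsLeast.csInf_eq ⟨⟨v, hv0, hFv⟩, ?_⟩⟩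
  rintro _ ⟨b, hb, rfl⟩
  exact hglb.1 ⟨(b, (1 - p) * b), ⟨hb, mul_nonneg h1p.le hb⟩, rfl⟩
end
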